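/- arXiv:2512.15928 — 3 statements merged into one kernel-verified Lean document; each statement's English description precedes it below -/
import Mathlib

section
/- Let γ be a full-rank density matrix and ρ a density matrix on a finite-dimensional Hilbert space. The minimum over all a ∈ [0,1] such that there exists a density matrix τ with ρ = (1-a)γ + a·τ equals 1 - μ_min(γ^{-1/2} ρ γ^{-1/2}). -/
/-!
Write `S = γ^{-1/2}`, so that `S γ S = 1`. Congruence by the invertible Hermitian `S` shows that
`ρ - c γ ⪰ 0` iff `S ρ S - c ⪰ 0`, i.e. iff `c ≤ μ_min(S ρ S)`. For `a ≥ 0` and unit-trace `ρ, γ`,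
a decomposition `ρ = (1 - a) γ + a τ` exists iff `ρ - (1 - a) γ ⪰ 0`: take
`τ = (ρ - (1 - a) γ) / a`, and for `a = 0` the trace forces `ρ = γ`. So the admissible `a` are those
in `[0, 1]` with `1 - a ≤ μ_min`, and `0 ≤ μ_min ≤ 1` because `ρ ⪰ 0` and
`tr (ρ - μ_min γ) = 1 - μ_min ≥ 0`.
-/

open Matrix
open scoped ComplexOrder

noncomputable def muMin {n : ℕ} [NeZero n] {A : Matrix (Fin n) (Fin n) ℂ}
    (hA : A.IsHermitian) : ℝ := ⨅ i, hA.eigenvalues i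

/-- The inverse of the positive square root of a positive definite matrix. -/
noncomputable def sqrtInv {n : ℕ} {γ : Matrix (Fin n) (Fin n) ℂ}
    (hγ : γ.PosDef) : Matrix (Fin n) (Fin n) ℂ := ((hγ.posSemidef.1.eigenvectorUnitary : Matrix (Fin n) (Fin n) ℂ) *
      diagonal ((↑) ∘ Real.sqrt ∘ hγ.posSemidef.1.eigenvalues) *
      (star hγ.posSemidef.1.eigenvectorUnitary : Matrix (Fin n) (Fin n) ℂ))⁻¹

namespace Matrix

section Conjugate

variable {ι R : Type*} [Fintype ι] [DecidableEq ι] [CommRing R] [PartialOrder R] [StarRing R]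

theorem posSemidef_conj_sub_smul_one_iff {S γ ρ : Matrix ι ι R} (hS : S.IsHermitian)
    (hSu : IsUnit S) (hSγS : S * γ * S = 1) (c : R) :
    (S * ρ * S - c • 1).PosSemidef ↔ (ρ - c • γ).PosSemidef := by
  have hconj : S * ρ * S - c • 1 = star S * (ρ - c • γ) * S := by
    rw [star_eq_conjTranspose, hS.eq, mul_sub, sub_mul, mul_smul_comm, smul_mul_assoc, hSγS]
  rw [hconj, hSu.posSemidef_star_left_conjugate_iff]

end Conjugate

variable {ι 𝕜 : Type*} [Fintype ι] [RCLike 𝕜]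

theorem exists_posSemidef_trace_one_eq_iff {γ ρ : Matrix ι ι 𝕜} (hρ : ρ.PosSemidef)
    (hρtr : ρ.trace = 1) (hγtr : γ.trace = 1) {a : ℝ} (ha : 0 ≤ a) :
    (∃ τ : Matrix ι ι 𝕜, τ.PosSemidef ∧ τ.trace = 1 ∧
        ρ = ((1 - a : ℝ) : 𝕜) • γ + (a : 𝕜) • τ) ↔
      (ρ - ((1 - a : ℝ) : 𝕜) • γ).PosSemidef := by
  refine ⟨?_, fun h ↦ ?_⟩
  · rintro ⟨τ, hτ, -, rfl⟩
    rw [add_sub_cancel_left]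
    exact hτ.smul (RCLike.ofReal_nonneg.mpr ha)
  rcases ha.eq_or_lt with rfl | ha
  · rw [sub_zero, RCLike.ofReal_one, one_smul] at h
    refine ⟨ρ, hρ, hρtr, ?_⟩
    have hργ : ρ - γ = 0 := by
      rw [← h.trace_eq_zero_iff, trace_sub, hρtr, hγtr, sub_self]
    simpa [sub_eq_zero] using hργ
  · refine ⟨((a⁻¹ : ℝ) : 𝕜) • (ρ - ((1 - a : ℝ) : 𝕜) • γ),
      h.smul (RCLike.ofReal_nonneg.mpr (inv_nonneg.mpr ha.le)), ?_, ?_⟩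
    · rw [trace_smul, trace_sub, trace_smul, hρtr, hγtr, smul_eq_mul, smul_eq_mul, mul_one]
      have : (a : 𝕜) ≠ 0 := RCLike.ofReal_ne_zero.mpr ha.ne'
      push_cast
      field_simp
      ring
    · rw [smul_smul, ← RCLike.ofReal_mul, mul_inv_cancel₀ ha.ne', RCLike.ofReal_one, one_smul,
        add_sub_cancel]

variable [DecidableEq ι]

theorem IsHermitian.posSemidef_sub_smul_one_iff {A : Matrix ι ι 𝕜} (hA : A.IsHermitian) (c : ℝ) :
    (A - (c : 𝕜) • 1).PosSemidef ↔ ∀ i, c ≤ hA.eigenvalues i := by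
  have hdiag : A - (c : 𝕜) • 1 = Unitary.conjStarAlgAut 𝕜 _ hA.eigenvectorUnitary
      (diagonal fun i ↦ ((hA.eigenvalues i - c : ℝ) : 𝕜)) := by
    have : (diagonal fun i ↦ ((hA.eigenvalues i - c : ℝ) : 𝕜)) =
        diagonal (RCLike.ofReal ∘ hA.eigenvalues) - (c : 𝕜) • 1 := by
      rw [smul_one_eq_diagonal, diagonal_sub]
      simp
    rw [this, map_sub, map_smul, map_one, ← hA.spectral_theorem]
  rw [hdiag, Unitary.conjStarAlgAut_apply,
    Unitary.isUnit_coe.posSemidef_star_right_conjugate_iff, posSemidef_diagonal_iff]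
  simp

theorem PosSemidef.cfc_sqrt_mul_self {A : Matrix ι ι 𝕜} (hA : A.PosSemidef) :
    hA.1.cfc Real.sqrt * hA.1.cfc Real.sqrt = A := by
  conv_rhs => rw [hA.1.spectral_theorem]
  rw [IsHermitian.cfc, ← map_mul, diagonal_mul_diagonal]
  congr 2 with i
  simp [← RCLike.ofReal_mul, Real.mul_self_sqrt (hA.eigenvalues_nonneg i)]

theorem PosDef.isUnit_det_cfc_sqrt {A : Matrix ι ι 𝕜} (hA : A.PosDef) :
    IsUnit (hA.1.cfc Real.sqrt).det := by
  have hdet : (hA.1.cfc Real.sqrt).det * (hA.1.cfc Real.sqrt).det = A.det := by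
    rw [← det_mul, hA.posSemidef.cfc_sqrt_mul_self]
  exact isUnit_of_mul_isUnit_left (hdet ▸ (isUnit_iff_isUnit_det A).mp hA.isUnit)

end Matrix

theorem le_muMin_iff {n : ℕ} [NeZero n] {A : Matrix (Fin n) (Fin n) ℂ} (hA : A.IsHermitian)
    {c : ℝ} : c ≤ muMin hA ↔ ∀ i, c ≤ hA.eigenvalues i :=
  le_ciInf_iff (Finite.bddBelow_range _)

section sqrtInv

variable {n : ℕ} {γ : Matrix (Fin n) (Fin n) ℂ} (hγ : γ.PosDef)

theorem sqrtInv_eq_inv_cfc_sqrt : sqrtInv hγ = (hγ.1.cfc Real.sqrt)⁻¹ := by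
  rw [IsHermitian.cfc, Unitary.conjStarAlgAut_apply]
  rfl

theorem isHermitian_sqrtInv : (sqrtInv hγ).IsHermitian := by
  rw [sqrtInv_eq_inv_cfc_sqrt, ← hγ.1.cfc_eq]
  exact IsHermitian.inv (cfc_predicate Real.sqrt γ)

theorem isUnit_sqrtInv : IsUnit (sqrtInv hγ) := by
  rw [sqrtInv_eq_inv_cfc_sqrt, isUnit_iff_isUnit_det]
  exact isUnit_nonsing_inv_det _ hγ.isUnit_det_cfc_sqrt

theorem sqrtInv_mul_mul_sqrtInv : sqrtInv hγ * γ * sqrtInv hγ = 1 := by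
  set Q := hγ.1.cfc Real.sqrt
  calc sqrtInv hγ * γ * sqrtInv hγ = Q⁻¹ * (Q * Q) * Q⁻¹ := by
        rw [sqrtInv_eq_inv_cfc_sqrt, hγ.posSemidef.cfc_sqrt_mul_self]
    _ = (Q⁻¹ * Q) * (Q * Q⁻¹) := by simp only [mul_assoc]
    _ = 1 := by
        rw [nonsing_inv_mul Q hγ.isUnit_det_cfc_sqrt, mul_nonsing_inv Q hγ.isUnit_det_cfc_sqrt,
          one_mul]

end sqrtInv

/-- The weight of athermality: the minimum `a ∈ [0,1]` such that
`ρ = (1-a)γ + a τ` for some density matrix `τ` equals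
`1 - μ_min(γ^{-1/2} ρ γ^{-1/2})`. -/
theorem stmt2 {n : ℕ} [NeZero n] (γ ρ : Matrix (Fin n) (Fin n) ℂ)
    (hγ : γ.PosDef) (hγtr : γ.trace = 1)
    (hρ : ρ.PosSemidef) (hρtr : ρ.trace = 1)
    (hA : (sqrtInv hγ * ρ * sqrtInv hγ).IsHermitian) :
    IsLeast {a : ℝ | 0 ≤ a ∧ a ≤ 1 ∧
        ∃ τ : Matrix (Fin n) (Fin n) ℂ, τ.PosSemidef ∧ τ.trace = 1 ∧
          ρ = ((1 - a : ℝ) : ℂ) • γ + (a : ℂ) • τ}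
      (1 - muMin hA) := by
  set μ := muMin hA
  have key (c : ℝ) : (ρ - (c : ℂ) • γ).PosSemidef ↔ c ≤ μ :=
    (posSemidef_conj_sub_smul_one_iff (isHermitian_sqrtInv hγ) (isUnit_sqrtInv hγ)
      (sqrtInv_mul_mul_sqrtInv hγ) _).symm.trans
      ((hA.posSemidef_sub_smul_one_iff c).trans (le_muMin_iff hA).symm)
  have hμ_nonneg : 0 ≤ μ := (key 0).1 (by simpa using hρ)
  have hμ_le_one : μ ≤ 1 := by
    have htr := ((key μ).2 le_rfl).trace_nonneg
    rw [trace_sub, trace_smul, hρtr, hγtr, smul_eq_mul, mul_one, ← Complex.ofReal_one,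
      ← Complex.ofReal_sub, Complex.zero_le_real] at htr
    linarith
  refine ⟨⟨by linarith, by linarith, (exists_posSemidef_trace_one_eq_iff hρ hρtr hγtr
    (by linarith)).2 ((key (1 - (1 - μ))).2 (by linarith))⟩, ?_⟩
  rintro a ⟨ha, -, hτ⟩
  have := (key (1 - a)).1 ((exists_posSemidef_trace_one_eq_iff hρ hρtr hγtr ha).1 hτ)
  linarith
end

section
/- Let ρ be a density matrix on a finite-dimensional Hilbert space, {Π_l} the projectors of a fixed orthonormal basis, Φ a quantum channel (CPTP map), and {P_k} another projective measurement. Define the product distribution p_coh(l,k)(σ) = Tr(σ Π_l)·Tr(Φ(σ) P_k) for any state σ. Then D_KL(p_coh(ρ) ‖ p_coh(Δ[ρ])) ≤ 2·D(ρ ‖ Δ[ρ]), where Δ is dephasing in the basis {Π_l}. -/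
open Matrix
open scoped ComplexOrder

/-- Classical Kullback–Leibler divergence of finitely supported distributions. -/
noncomputable def KLdiv {I : Type*} [Fintype I] (p q : I → ℝ) : ℝ :=
  ∑ i, p i * Real.log (p i / q i)

/-- The logarithm of a Hermitian matrix, via the spectral theorem. -/
noncomputable def hermLog {n : ℕ} {A : Matrix (Fin n) (Fin n) ℂ}
    (hA : A.IsHermitian) : Matrix (Fin n) (Fin n) ℂ :=
  (hA.eigenvectorUnitary : Matrix (Fin n) (Fin n) ℂ) *
    Matrix.diagonal (fun i => (Real.log (hA.eigenvalues i) : ℂ)) *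
    star (hA.eigenvectorUnitary : Matrix (Fin n) (Fin n) ℂ)

/-- EPM joint distribution: `p_coh(σ)(l,k) = Tr(σ Π_l) · Tr(Φ(σ) P_k)`, where
`Π_l` are the projectors of the standard (reference) basis and `Φ` is the CPTP
map with Kraus operators `A α`. -/
noncomputable def pcoh {n mK K : ℕ} (A : Fin mK → Matrix (Fin n) (Fin n) ℂ)
    (P : Fin K → Matrix (Fin n) (Fin n) ℂ)
    (σ : Matrix (Fin n) (Fin n) ℂ) : Fin n × Fin K → ℝ :=
  fun x => ((σ * Matrix.single x.1 x.1 1).trace).re *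
    (((∑ α, A α * σ * (A α)ᴴ) * P x.2).trace).re

/-!
Since `Δ[ρ]` has the same diagonal as `ρ`, both joint distributions factor as
`ρₗₗ · Tr(σ Fₖ)` with the POVM `Fₖ = Φ†(Pₖ)`, so the left side is the measured divergence
`KL(q‖q')` of `ρ` and `σ = Δ[ρ]` under `F`. It is at most `D(ρ‖σ)`, and `D(ρ‖σ) ≥ 0`.

For the measured bound, `D(ρ‖σ)` is the KL divergence of the Nussbaum–Szkoła distributions
`P(i,j) = rᵢ |Uⱼᵢ|²`, `Q(i,j) = sⱼ |Uⱼᵢ|²`, and a KL divergence is controlled by the resolvents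
`χₜ(p,q) = ∑ q² / (p + t q)`, `t > 0`: the function `t ↦ ∑ p (log (1 + t) - log (p + t q))` runs
from `-∑ p log p` to `-∑ p log q` with derivative `1/(1+t) - 1 + t χₜ(p,q)`. Finally
`χₜ(P,Q) = Re Tr(Y† σ)` for the solution of `ρ Y + t Y σ = σ`, and a variational principle for `Y`
together with the operator Cauchy–Schwarz inequality `(∑ wₖ Fₖ)² ≤ ∑ wₖ² Fₖ` shows that it
dominates `χₜ(q,q')`.
-/

open Filter Set Topology

noncomputable def klPath (a b t : ℝ) : ℝ :=
  a * (Real.log (1 + t) - Real.log (a + t * b))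

noncomputable def chiSqResolvent {I : Type*} [Fintype I] (p q : I → ℝ) (t : ℝ) : ℝ :=
  ∑ i, q i ^ 2 / (p i + t * q i)

section KLPath

variable {a b : ℝ}

lemma klPath_zero_left (b : ℝ) : klPath 0 b = fun _ => 0 := by
  ext
  simp [klPath]

lemma klPath_apply_zero (a b : ℝ) : klPath a b 0 = -(a * Real.log a) := by simp [klPath]

lemma hasDerivAt_klPath (ha : 0 ≤ a) (hb : 0 ≤ b) {t : ℝ} (ht : 0 < t) :
    HasDerivAt (klPath a b) (a / (1 + t) - b + t * (b ^ 2 / (a + t * b))) t := by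
  rcases ha.eq_or_lt with rfl | ha
  · have hval : 0 / (1 + t) - b + t * (b ^ 2 / (0 + t * b)) = 0 := by
      rcases hb.eq_or_lt with rfl | hb
      · simp
      · field_simp
        ring
    rw [hval, klPath_zero_left]
    exact hasDerivAt_const t 0
  · have h1 : 0 < 1 + t := by linarith
    have h2 : 0 < a + t * b := by positivity
    have d2 : HasDerivAt (fun y => a + y * b) b t := by
      simpa using ((hasDerivAt_id' t).mul_const b).const_add a
    refine ((((hasDerivAt_id' t).const_add 1).log h1.ne').sub (d2.log h2.ne')).const_mul a
      |>.congr_deriv ?_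
    field_simp
    ring

lemma continuousOn_klPath (ha : 0 ≤ a) (hb : 0 ≤ b) :
    ContinuousOn (klPath a b) (Ici (0 : ℝ)) := by
  rcases ha.eq_or_lt with rfl | ha
  · rw [klPath_zero_left]
    exact continuousOn_const
  · unfold klPath
    refine continuousOn_const.mul (ContinuousOn.sub ?_ ?_) <;>
      refine ContinuousOn.log (by fun_prop) fun t (ht : (0 : ℝ) ≤ t) => ?_ <;> positivity

lemma tendsto_klPath (ha : 0 ≤ a) (hb : 0 ≤ b) (hab : b = 0 → a = 0) :
    Tendsto (klPath a b) atTop (𝓝 (-(a * Real.log b))) := by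
  rcases ha.eq_or_lt with rfl | ha
  · simp [klPath_zero_left]
  have hb : 0 < b := hb.lt_of_ne fun h => ha.ne' (hab h.symm)
  have hratio : Tendsto (fun t => b + (a - b) / (1 + t)) atTop (𝓝 b) := by
    simpa using (tendsto_const_nhds (x := b)).add
      (tendsto_const_nhds.div_atTop (tendsto_atTop_add_const_left _ (1 : ℝ) tendsto_id))
  refine (((Real.continuousAt_log hb.ne').tendsto.comp hratio).const_mul a).neg.congr' ?_
  filter_upwards [eventually_gt_atTop 0] with t ht
  have h1 : 0 < 1 + t := by linarith
  have h2 : 0 < a + t * b := by positivity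
  have : b + (a - b) / (1 + t) = (a + t * b) / (1 + t) := by field_simp; ring
  simp only [Function.comp_apply, this, Real.log_div h2.ne' h1.ne', klPath]
  ring

end KLPath

section KLdiv

variable {I J : Type*} [Fintype I] [Fintype J]

lemma KLdiv_eq_sub {p q : I → ℝ} (hpq : ∀ i, q i = 0 → p i = 0) :
    KLdiv p q = ∑ i, p i * Real.log (p i) - ∑ i, p i * Real.log (q i) := by
  rw [KLdiv, ← Finset.sum_sub_distrib]
  refine Finset.sum_congr rfl fun i _ => ?_
  by_cases hp : p i = 0
  · simp [hp]
  · rw [Real.log_div hp (mt (hpq i) hp), mul_sub]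

lemma KLdiv_prod_same_fst {p : I → ℝ} (hp : ∑ i, p i = 1) (q q' : J → ℝ) :
    KLdiv (fun x : I × J => p x.1 * q x.2) (fun x => p x.1 * q' x.2) = KLdiv q q' := by
  have hterm : ∀ i j, p i * q j * Real.log (p i * q j / (p i * q' j))
      = p i * (q j * Real.log (q j / q' j)) := fun i j => by
    rcases eq_or_ne (p i) 0 with h | h
    · simp [h]
    · rw [mul_div_mul_left _ _ h, mul_assoc]
  simp only [KLdiv, Fintype.sum_prod_type, hterm, ← Finset.mul_sum, ← Finset.sum_mul, hp,
    one_mul]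

lemma hasDerivAt_sum_klPath {p q : I → ℝ} (hp : p ∈ stdSimplex ℝ I)
    (hq : q ∈ stdSimplex ℝ I) {t : ℝ} (ht : 0 < t) :
    HasDerivAt (fun t => ∑ i, klPath (p i) (q i) t)
      (1 / (1 + t) - 1 + t * chiSqResolvent p q t) t := by
  refine (HasDerivAt.fun_sum fun i _ => hasDerivAt_klPath (hp.1 i) (hq.1 i) ht).congr_deriv ?_
  simp only [Finset.sum_add_distrib, Finset.sum_sub_distrib, ← Finset.sum_div, ← Finset.mul_sum,
    hp.2, hq.2, chiSqResolvent]

lemma tendsto_sum_klPath {p q : I → ℝ} (hp : ∀ i, 0 ≤ p i) (hq : ∀ i, 0 ≤ q i)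
    (hpq : ∀ i, q i = 0 → p i = 0) :
    Tendsto (fun t => ∑ i, klPath (p i) (q i) t) atTop
      (𝓝 (-∑ i, p i * Real.log (q i))) := by
  rw [← Finset.sum_neg_distrib]
  exact tendsto_finsetSum _ fun i _ => tendsto_klPath (hp i) (hq i) (hpq i)

theorem KLdiv_le_of_chiSqResolvent_le {p q : I → ℝ} {p' q' : J → ℝ}
    (hp : p ∈ stdSimplex ℝ I) (hq : q ∈ stdSimplex ℝ I) (hpq : ∀ i, q i = 0 → p i = 0)
    (hp' : p' ∈ stdSimplex ℝ J) (hq' : q' ∈ stdSimplex ℝ J)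
    (hpq' : ∀ j, q' j = 0 → p' j = 0)
    (hχ : ∀ t, 0 < t → chiSqResolvent p' q' t ≤ chiSqResolvent p q t) :
    KLdiv p' q' ≤ KLdiv p q := by
  set H : ℝ → ℝ := fun t => ∑ i, klPath (p i) (q i) t - ∑ j, klPath (p' j) (q' j) t
  have hderiv : ∀ t, 0 < t →
      HasDerivAt H (t * (chiSqResolvent p q t - chiSqResolvent p' q' t)) t := fun t ht =>
    ((hasDerivAt_sum_klPath hp hq ht).sub (hasDerivAt_sum_klPath hp' hq' ht)).congr_deriv
      (by ring)
  have hmono : MonotoneOn H (Ici 0) := by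
    refine monotoneOn_of_deriv_nonneg (convex_Ici 0) ?_ ?_ ?_
    · exact ContinuousOn.sub
        (continuousOn_finsetSum _ fun i _ => continuousOn_klPath (hp.1 i) (hq.1 i))
        (continuousOn_finsetSum _ fun j _ => continuousOn_klPath (hp'.1 j) (hq'.1 j))
    · rw [interior_Ici]
      exact fun t ht => (hderiv t ht).differentiableAt.differentiableWithinAt
    · rw [interior_Ici]
      intro t ht
      rw [(hderiv t ht).deriv]
      exact mul_nonneg (le_of_lt ht) (sub_nonneg.mpr (hχ t ht))
  have hlim := (tendsto_sum_klPath hp.1 hq.1 hpq).sub (tendsto_sum_klPath hp'.1 hq'.1 hpq')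
  have h0 : H 0 ≤ -∑ i, p i * Real.log (q i) - -∑ j, p' j * Real.log (q' j) :=
    ge_of_tendsto hlim (eventually_ge_atTop 0 |>.mono fun t ht => hmono self_mem_Ici ht ht)
  simp only [H, klPath_apply_zero, Finset.sum_neg_distrib] at h0
  rw [KLdiv_eq_sub hpq, KLdiv_eq_sub hpq']
  linarith

end KLdiv

section Measurement

variable {ι κ : Type*} [DecidableEq ι] [Fintype κ]

structure IsPOVM (F : κ → Matrix ι ι ℂ) : Prop where
  posSemidef : ∀ k, (F k).PosSemidef
  sum_eq_one : ∑ k, F k = 1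

lemma IsPOVM.isHermitian_sum_smul {F : κ → Matrix ι ι ℂ} (hF : IsPOVM F) (w : κ → ℝ) :
    (∑ k, w k • F k).IsHermitian :=
  isSelfAdjoint_sum _ fun k _ => (hF.posSemidef k).isHermitian.smul (IsSelfAdjoint.all (w k))

lemma isPOVM_one : IsPOVM fun _ : Unit => (1 : Matrix ι ι ℂ) :=
  ⟨fun _ => PosSemidef.one, Fintype.sum_unique _⟩

variable [Fintype ι]

open scoped MatrixOrder in
lemma re_trace_mul_nonneg {A B : Matrix ι ι ℂ} (hA : A.PosSemidef) (hB : B.PosSemidef) :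
    0 ≤ (A * B).trace.re := by
  obtain ⟨C, rfl⟩ := CStarAlgebra.nonneg_iff_eq_star_mul_self.mp hB.nonneg
  rw [← mul_assoc, trace_mul_comm, ← mul_assoc, star_eq_conjTranspose]
  exact (Complex.nonneg_iff.mp (hA.mul_mul_conjTranspose_same C).trace_nonneg).1

noncomputable def outcomeProb (ρ : Matrix ι ι ℂ) (F : κ → Matrix ι ι ℂ) (k : κ) : ℝ :=
  (ρ * F k).trace.re

variable {F : κ → Matrix ι ι ℂ}

lemma IsPOVM.outcomeProb_mem_stdSimplex (hF : IsPOVM F) {ρ : Matrix ι ι ℂ}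
    (hρ : ρ.PosSemidef) (htr : ρ.trace = 1) : outcomeProb ρ F ∈ stdSimplex ℝ κ := by
  refine ⟨fun k => re_trace_mul_nonneg hρ (hF.posSemidef k), ?_⟩
  simp only [outcomeProb, ← Complex.re_sum, ← trace_sum, ← Finset.mul_sum, hF.sum_eq_one,
    mul_one, htr, Complex.one_re]

lemma re_trace_diagonal_mul (s : ι → ℝ) (G : Matrix ι ι ℂ) :
    (diagonal (fun j => (s j : ℂ)) * G).trace.re = ∑ j, s j * (G j j).re := by
  simp [trace, Complex.re_sum]

lemma Matrix.PosSemidef.eq_zero_of_re_trace_diagonal_mul_eq_zero {G : Matrix ι ι ℂ}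
    (hG : G.PosSemidef) {s : ι → ℝ} (hs : ∀ j, 0 < s j)
    (h : (diagonal (fun j => (s j : ℂ)) * G).trace.re = 0) : G = 0 := by
  rw [re_trace_diagonal_mul] at h
  have hre : ∀ j, (G j j).re = 0 := fun j => by
    have := (Finset.sum_eq_zero_iff_of_nonneg fun j _ =>
      mul_nonneg (hs j).le (Complex.nonneg_iff.mp hG.diag_nonneg).1).mp h j (Finset.mem_univ j)
    exact (mul_eq_zero.mp this).resolve_left (hs j).ne'
  refine hG.trace_eq_zero_iff.mp (Finset.sum_eq_zero fun j _ => Complex.ext (hre j) ?_)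
  exact (Complex.nonneg_iff.mp hG.diag_nonneg).2.symm

lemma IsPOVM.outcomeProb_eq_zero_of_diagonal (hF : IsPOVM F) (ρ : Matrix ι ι ℂ)
    {s : ι → ℝ} (hs : ∀ j, 0 < s j) (k : κ)
    (h : outcomeProb (diagonal fun j => (s j : ℂ)) F k = 0) :
    outcomeProb ρ F k = 0 := by
  simp [outcomeProb, (hF.posSemidef k).eq_zero_of_re_trace_diagonal_mul_eq_zero hs h]

lemma re_trace_sum_smul_mul (w : κ → ℝ) (M : Matrix ι ι ℂ) :
    ((∑ k, w k • F k) * M).trace.re = ∑ k, w k * outcomeProb M F k := by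
  simp only [Finset.sum_mul, trace_sum, Complex.re_sum, smul_mul_assoc, trace_smul,
    Complex.smul_re, smul_eq_mul, outcomeProb, trace_mul_comm (F _)]

/-- Operator Cauchy–Schwarz: the difference is `∑ (wₖ - Z) Fₖ (wₖ - Z)` with `Z = ∑ wₖ Fₖ`. -/
lemma IsPOVM.posSemidef_sum_sq_smul_sub (hF : IsPOVM F) (w : κ → ℝ) :
    ((∑ k, w k ^ 2 • F k) - (∑ k, w k • F k) * (∑ k, w k • F k)).PosSemidef := by
  set Z := ∑ k, w k • F k
  have hZ : Zᴴ = Z := (hF.isHermitian_sum_smul w).eq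
  have key :
      (∑ k, w k ^ 2 • F k) - Z * Z = ∑ k, (w k • 1 - Z)ᴴ * F k * (w k • 1 - Z) := by
    have hsum : ∑ k, Z * F k * Z = Z * Z := by
      rw [← Finset.sum_mul, ← Finset.mul_sum, hF.sum_eq_one, mul_one]
    simp only [conjTranspose_sub, conjTranspose_smul, star_trivial, conjTranspose_one, hZ,
      sub_mul, mul_sub, smul_mul_assoc, mul_smul_comm, one_mul, mul_one, smul_sub, smul_smul,
      Finset.sum_sub_distrib, hsum, ← sq]
    have hleft : ∑ k, w k • (Z * F k) = Z ^ 2 := by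
      simp only [← mul_smul_comm, ← Finset.mul_sum, sq, Z]
    have hright : ∑ k, w k • (F k * Z) = Z ^ 2 := by
      simp only [← smul_mul_assoc, ← Finset.sum_mul, sq, Z]
    rw [hleft, hright]
    abel
  rw [key]
  exact posSemidef_sum _ fun k _ => (hF.posSemidef k).conjTranspose_mul_mul_same _

/-- The two sides differ by `Re Tr ((Z - Y)† ρ (Z - Y)) + t Re Tr ((Z - Y)† (Z - Y) σ) ≥ 0`. -/
lemma re_trace_variational_le {ρ σ Y : Matrix ι ι ℂ} (hρ : ρ.PosSemidef)
    (hσ : σ.PosSemidef) {t : ℝ} (ht : 0 ≤ t) (hY : ρ * Y + t • (Y * σ) = σ)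
    (Z : Matrix ι ι ℂ) :
    (Zᴴ * σ).trace.re + (σ * Z).trace.re - (Zᴴ * ρ * Z).trace.re
        - t * (Zᴴ * Z * σ).trace.re
      ≤ (Yᴴ * σ).trace.re := by
  have hρZY : 0 ≤ ((Z - Y)ᴴ * ρ * (Z - Y)).trace.re :=
    (Complex.nonneg_iff.mp (hρ.conjTranspose_mul_mul_same _).trace_nonneg).1
  have hσZY : 0 ≤ ((Z - Y)ᴴ * (Z - Y) * σ).trace.re :=
    re_trace_mul_nonneg (posSemidef_conjTranspose_mul_self _) hσ
  have hYadj : Yᴴ * ρ + t • (σ * Yᴴ) = σ := by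
    simpa [conjTranspose_add, conjTranspose_mul, hρ.1.eq, hσ.1.eq] using congr_arg (·ᴴ) hY
  have eZ := congr_arg (fun M => (Zᴴ * M).trace) hY
  have eY := congr_arg (fun M => (Yᴴ * M).trace) hY
  have eZ' := congr_arg (fun M => (M * Z).trace) hYadj
  simp only [mul_add, add_mul, mul_smul_comm, smul_mul_assoc, trace_add, trace_smul,
    Complex.real_smul, ← mul_assoc] at eZ eY eZ'
  rw [← trace_mul_cycle Yᴴ Z σ] at eZ'
  have hexpand : ((Z - Y)ᴴ * ρ * (Z - Y)).trace + t * ((Z - Y)ᴴ * (Z - Y) * σ).trace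
      = (Zᴴ * ρ * Z).trace + t * (Zᴴ * Z * σ).trace - (Zᴴ * σ).trace - (σ * Z).trace
        + (Yᴴ * σ).trace := by
    simp only [conjTranspose_sub, sub_mul, mul_sub, trace_sub]
    linear_combination -eZ - eZ' + eY
  have := congr_arg Complex.re hexpand
  simp only [Complex.add_re, Complex.sub_re, Complex.re_ofReal_mul] at this
  nlinarith [mul_nonneg ht hσZY]

/-- Test the variational principle with `Z = ∑ wₖ Fₖ`, `wₖ = q'ₖ / (qₖ + t q'ₖ)`. -/
theorem chiSqResolvent_outcomeProb_le (hF : IsPOVM F) {ρ σ Y : Matrix ι ι ℂ}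
    (hρ : ρ.PosSemidef) (hσ : σ.PosSemidef) {t : ℝ} (ht : 0 < t)
    (hY : ρ * Y + t • (Y * σ) = σ) :
    chiSqResolvent (outcomeProb ρ F) (outcomeProb σ F) t ≤ (Yᴴ * σ).trace.re := by
  set q := outcomeProb ρ F
  set q' := outcomeProb σ F
  set w : κ → ℝ := fun k => q' k / (q k + t * q' k)
  set Z := ∑ k, w k • F k
  have hZ : Zᴴ = Z := (hF.isHermitian_sum_smul w).eq
  have hschwarz (M : Matrix ι ι ℂ) (hM : M.PosSemidef) :
      (Z * Z * M).trace.re ≤ ∑ k, w k ^ 2 * outcomeProb M F k := by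
    have := re_trace_mul_nonneg (hF.posSemidef_sum_sq_smul_sub w) hM
    rw [sub_mul, trace_sub, Complex.sub_re, re_trace_sum_smul_mul] at this
    linarith
  have hlin : (Zᴴ * σ).trace.re = ∑ k, w k * q' k := by rw [hZ, re_trace_sum_smul_mul]
  have hlin' : (σ * Z).trace.re = ∑ k, w k * q' k := by rw [trace_mul_comm, ← hZ, hlin]
  have hquad : (Zᴴ * ρ * Z).trace.re = (Z * Z * ρ).trace.re := by
    rw [hZ, trace_mul_cycle]
  have hterm : ∀ k, q' k ^ 2 / (q k + t * q' k)
      = 2 * (w k * q' k) - w k ^ 2 * q k - t * (w k ^ 2 * q' k) := fun k => by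
    rcases eq_or_ne (q k + t * q' k) 0 with h | h
    · simp [w, h]
    · rw [show 2 * (w k * q' k) - w k ^ 2 * q k - t * (w k ^ 2 * q' k)
          = 2 * (w k * q' k) - w k * (w k * (q k + t * q' k)) by ring,
        show w k * (q k + t * q' k) = q' k from div_mul_cancel₀ _ h]
      ring
  have hvar := re_trace_variational_le hρ hσ ht.le hY Z
  rw [hlin, hlin', hquad, hZ] at hvar
  have hσbound := mul_le_mul_of_nonneg_left (hschwarz σ hσ) ht.le
  simp only [chiSqResolvent, hterm, Finset.sum_sub_distrib, ← Finset.mul_sum]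
  linarith [hschwarz ρ hρ]

end Measurement

namespace Matrix.IsHermitian

variable {ι : Type*} [Fintype ι] [DecidableEq ι] {ρ : Matrix ι ι ℂ} (hρ : ρ.IsHermitian)

lemma eq_eigenvectorUnitary_mul_diagonal_mul_star :
    ρ = hρ.eigenvectorUnitary * diagonal (fun i => (hρ.eigenvalues i : ℂ))
      * star (hρ.eigenvectorUnitary : Matrix ι ι ℂ) := by
  have h := hρ.spectral_theorem
  rw [Unitary.conjStarAlgAut_apply] at h
  exact h

lemma mul_eigenvectorUnitary :
    ρ * hρ.eigenvectorUnitary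
      = hρ.eigenvectorUnitary * diagonal (fun i => (hρ.eigenvalues i : ℂ)) := by
  rw [congr_arg (· * (hρ.eigenvectorUnitary : Matrix ι ι ℂ))
    hρ.eq_eigenvectorUnitary_mul_diagonal_mul_star]
  simp [mul_assoc]

lemma sum_norm_sq_eigenvectorUnitary_col (i : ι) :
    ∑ j, ‖(hρ.eigenvectorUnitary : Matrix ι ι ℂ) j i‖ ^ 2 = 1 := by
  have := congr_fun (congr_fun (Unitary.coe_star_mul_self hρ.eigenvectorUnitary) i) i
  simp only [mul_apply, star_apply, RCLike.star_def, Complex.conj_mul', one_apply_eq] at this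
  exact_mod_cast this

lemma sum_norm_sq_eigenvectorUnitary_row (j : ι) :
    ∑ i, ‖(hρ.eigenvectorUnitary : Matrix ι ι ℂ) j i‖ ^ 2 = 1 := by
  have := congr_fun (congr_fun (Unitary.coe_mul_star_self hρ.eigenvectorUnitary) j) j
  simp only [mul_apply, Unitary.coe_star, star_apply, RCLike.star_def, Complex.mul_conj',
    one_apply_eq] at this
  exact_mod_cast this

lemma re_diag_eq_sum (j : ι) :
    (ρ j j).re
      = ∑ i, hρ.eigenvalues i * ‖(hρ.eigenvectorUnitary : Matrix ι ι ℂ) j i‖ ^ 2 := by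
  rw [congr_fun (congr_fun hρ.eq_eigenvectorUnitary_mul_diagonal_mul_star j) j]
  simp only [mul_apply, diagonal_apply, mul_ite, mul_zero, Finset.sum_ite_eq', Finset.mem_univ,
    if_true, star_apply, RCLike.star_def, Complex.re_sum]
  refine Finset.sum_congr rfl fun i _ => ?_
  rw [mul_right_comm, Complex.mul_conj', ← Complex.ofReal_pow, ← Complex.ofReal_mul,
    Complex.ofReal_re, mul_comm]

end Matrix.IsHermitian

section NussbaumSzkola

variable {ι κ : Type*} [Fintype ι] [DecidableEq ι] [Fintype κ] {ρ : Matrix ι ι ℂ}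

/-- The Nussbaum–Szkoła distributions of `ρ = ∑ᵢ rᵢ |uᵢ⟩⟨uᵢ|` and `σ = diagonal s`:
`P (i, j) = rᵢ |⟨j|uᵢ⟩|²` and `Q (i, j) = sⱼ |⟨j|uᵢ⟩|²`. -/
noncomputable def nussbaumSzkolaLeft (hρ : ρ.IsHermitian) : ι × ι → ℝ :=
  fun x => hρ.eigenvalues x.1 * ‖(hρ.eigenvectorUnitary : Matrix ι ι ℂ) x.2 x.1‖ ^ 2

noncomputable def nussbaumSzkolaRight (hρ : ρ.IsHermitian) (s : ι → ℝ) : ι × ι → ℝ :=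
  fun x => s x.2 * ‖(hρ.eigenvectorUnitary : Matrix ι ι ℂ) x.2 x.1‖ ^ 2

lemma nussbaumSzkolaLeft_mem_stdSimplex (hρ : ρ.PosSemidef) (htr : ρ.trace = 1) :
    nussbaumSzkolaLeft hρ.1 ∈ stdSimplex ℝ (ι × ι) := by
  refine ⟨fun x => mul_nonneg (hρ.eigenvalues_nonneg _) (sq_nonneg _), ?_⟩
  rw [Fintype.sum_prod_type_right]
  simp only [nussbaumSzkolaLeft, ← hρ.1.re_diag_eq_sum, ← Complex.re_sum]
  exact congr_arg Complex.re htr |>.trans Complex.one_re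

lemma nussbaumSzkolaRight_mem_stdSimplex (hρ : ρ.IsHermitian) {s : ι → ℝ}
    (hs : ∀ j, 0 ≤ s j) (hs1 : ∑ j, s j = 1) :
    nussbaumSzkolaRight hρ s ∈ stdSimplex ℝ (ι × ι) := by
  refine ⟨fun x => mul_nonneg (hs _) (sq_nonneg _), ?_⟩
  simp only [Fintype.sum_prod_type_right, nussbaumSzkolaRight, ← Finset.mul_sum,
    hρ.sum_norm_sq_eigenvectorUnitary_row, mul_one, hs1]

lemma nussbaumSzkolaLeft_eq_zero_of_right (hρ : ρ.IsHermitian) {s : ι → ℝ} (hs : ∀ j, 0 < s j)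
    (x : ι × ι) (h : nussbaumSzkolaRight hρ s x = 0) : nussbaumSzkolaLeft hρ x = 0 := by
  simp only [nussbaumSzkolaRight, nussbaumSzkolaLeft] at h ⊢
  rw [(mul_eq_zero.mp h).resolve_left (hs x.2).ne', mul_zero]

lemma KLdiv_nussbaumSzkola (hρ : ρ.IsHermitian) {s : ι → ℝ} (hs : ∀ j, 0 < s j) :
    KLdiv (nussbaumSzkolaLeft hρ) (nussbaumSzkolaRight hρ s)
      = ∑ i, hρ.eigenvalues i * Real.log (hρ.eigenvalues i)
        - ∑ j, (ρ j j).re * Real.log (s j) := by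
  have hterm : ∀ (a w : ℝ) (j : ι), a * w * Real.log (a * w / (s j * w))
      = w * (a * Real.log a) - a * w * Real.log (s j) := fun a w j => by
    rcases eq_or_ne w 0 with hw | hw
    · simp [hw]
    rcases eq_or_ne a 0 with ha | ha
    · simp [ha]
    rw [mul_div_mul_right _ _ hw, Real.log_div ha (hs j).ne']
    ring
  simp only [KLdiv, Fintype.sum_prod_type, nussbaumSzkolaLeft, nussbaumSzkolaRight, hterm,
    Finset.sum_sub_distrib, ← Finset.sum_mul, hρ.sum_norm_sq_eigenvectorUnitary_col, one_mul]
  rw [Finset.sum_comm]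
  simp only [← Finset.sum_mul, hρ.re_diag_eq_sum]

lemma chiSqResolvent_nussbaumSzkola (hρ : ρ.IsHermitian) (s : ι → ℝ) (t : ℝ) :
    chiSqResolvent (nussbaumSzkolaLeft hρ) (nussbaumSzkolaRight hρ s) t
      = ∑ j, s j * ∑ i, ‖(hρ.eigenvectorUnitary : Matrix ι ι ℂ) j i‖ ^ 2
          * (s j / (hρ.eigenvalues i + t * s j)) := by
  have hterm : ∀ a b w : ℝ,
      (b * w) ^ 2 / (a * w + t * (b * w)) = b * (w * (b / (a + t * b))) := fun a b w => by
    rcases eq_or_ne w 0 with hw | hw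
    · simp [hw]
    rw [show a * w + t * (b * w) = (a + t * b) * w by ring, mul_pow, sq w, ← mul_assoc,
      mul_div_mul_right _ _ hw]
    ring
  simp only [chiSqResolvent, Fintype.sum_prod_type_right, nussbaumSzkolaLeft,
    nussbaumSzkolaRight, hterm, Finset.mul_sum]

/-- In an eigenbasis `U` of `ρ` the equation decouples entrywise: `Y = U N` with
`N i j = conj (U j i) sⱼ / (rᵢ + t sⱼ)`. -/
lemma exists_sylvester_solution {U : Matrix ι ι ℂ} (hU : U * star U = 1) {r : ι → ℝ}
    (hr : ∀ i, 0 ≤ r i) (hρU : ρ * U = U * diagonal fun i => (r i : ℂ)) {s : ι → ℝ}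
    (hs : ∀ j, 0 < s j) {t : ℝ} (ht : 0 < t) :
    ∃ Y : Matrix ι ι ℂ,
      ρ * Y + t • (Y * diagonal fun j => (s j : ℂ)) = (diagonal fun j => (s j : ℂ))
      ∧ (Yᴴ * diagonal fun j => (s j : ℂ)).trace.re
        = ∑ j, s j * ∑ i, ‖U j i‖ ^ 2 * (s j / (r i + t * s j)) := by
  have hc : ∀ i j, r i * (s j / (r i + t * s j)) + t * (s j / (r i + t * s j) * s j) = s j :=
    fun i j => by
      rw [show ∀ c : ℝ, r i * c + t * (c * s j) = c * (r i + t * s j) from fun c => by ring]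
      exact div_mul_cancel₀ _ (add_pos_of_nonneg_of_pos (hr i) (mul_pos ht (hs j))).ne'
  let N : Matrix ι ι ℂ := of fun i j => star (U j i) * (s j / (r i + t * s j) : ℝ)
  have hN : (diagonal fun i => (r i : ℂ)) * N + t • (N * diagonal fun j => (s j : ℂ))
      = star U * diagonal fun j => (s j : ℂ) := by
    ext i j
    simp only [Matrix.add_apply, Matrix.smul_apply, diagonal_mul, mul_diagonal, N, of_apply,
      star_apply, Complex.real_smul]
    have := congr_arg (fun x : ℝ => (x : ℂ)) (hc i j)
    push_cast at this ⊢
    linear_combination star (U j i) * this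
  refine ⟨U * N, ?_, ?_⟩
  · rw [← mul_assoc, hρU, mul_assoc, mul_assoc, ← mul_smul_comm, ← mul_add, hN, ← mul_assoc,
      hU, one_mul]
  · have hdiag : ∀ j,
        (U * N) j j = ((∑ i, ‖U j i‖ ^ 2 * (s j / (r i + t * s j)) : ℝ) : ℂ) := fun j => by
      simp only [mul_apply, N, of_apply, ← mul_assoc, RCLike.star_def, Complex.mul_conj']
      push_cast
      rfl
    simp only [trace, diag_apply, mul_diagonal, conjTranspose_apply, hdiag, Complex.star_def,
      Complex.conj_ofReal, ← Complex.ofReal_mul, ← Complex.ofReal_sum, Complex.ofReal_re,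
      mul_comm]

/-- Data processing for measurements, `D(ρ‖σ) ≥ KL(q‖q')`, for diagonal `σ`. -/
theorem KLdiv_outcomeProb_diagonal_le {F : κ → Matrix ι ι ℂ} (hF : IsPOVM F)
    (hρ : ρ.PosSemidef) (htr : ρ.trace = 1) {s : ι → ℝ} (hs : ∀ j, 0 < s j)
    (hs1 : ∑ j, s j = 1) :
    KLdiv (outcomeProb ρ F) (outcomeProb (diagonal fun j => (s j : ℂ)) F)
      ≤ ∑ i, hρ.1.eigenvalues i * Real.log (hρ.1.eigenvalues i)
        - ∑ j, (ρ j j).re * Real.log (s j) := by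
  have hσ : (diagonal fun j => (s j : ℂ)).PosSemidef :=
    posSemidef_diagonal_iff.mpr fun j => Complex.zero_le_real.mpr (hs j).le
  have hσtr : (diagonal fun j => (s j : ℂ)).trace = 1 := by
    rw [trace_diagonal, ← Complex.ofReal_sum, hs1, Complex.ofReal_one]
  rw [← KLdiv_nussbaumSzkola hρ.1 hs]
  refine KLdiv_le_of_chiSqResolvent_le (nussbaumSzkolaLeft_mem_stdSimplex hρ htr)
    (nussbaumSzkolaRight_mem_stdSimplex hρ.1 (fun j => (hs j).le) hs1)
    (nussbaumSzkolaLeft_eq_zero_of_right hρ.1 hs) (hF.outcomeProb_mem_stdSimplex hρ htr)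
    (hF.outcomeProb_mem_stdSimplex hσ hσtr) (hF.outcomeProb_eq_zero_of_diagonal ρ hs)
    fun t ht => ?_
  obtain ⟨Y, hY, hYtr⟩ := exists_sylvester_solution
    (Unitary.mul_star_self_of_mem hρ.1.eigenvectorUnitary.2) hρ.eigenvalues_nonneg
    hρ.1.mul_eigenvectorUnitary hs ht
  rw [chiSqResolvent_nussbaumSzkola, ← hYtr]
  exact chiSqResolvent_outcomeProb_le hF hρ hσ ht hY

/-- Klein's inequality, from the trivial one-outcome measurement. -/
lemma klein_inequality_diagonal (hρ : ρ.PosSemidef) (htr : ρ.trace = 1)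
    {s : ι → ℝ} (hs : ∀ j, 0 < s j) (hs1 : ∑ j, s j = 1) :
    0 ≤ ∑ i, hρ.1.eigenvalues i * Real.log (hρ.1.eigenvalues i)
      - ∑ j, (ρ j j).re * Real.log (s j) := by
  have := KLdiv_outcomeProb_diagonal_le isPOVM_one hρ htr hs hs1
  simpa [KLdiv, outcomeProb, htr, trace_diagonal, ← Complex.ofReal_sum, hs1] using this

end NussbaumSzkola

section HermLog

/-- `U` only connects coordinates `j` and `i` with `d j = μ i`. -/
lemma diagonal_comp_mul_eq_mul_diagonal_comp {ι : Type*} [Fintype ι] [DecidableEq ι]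
    {d : ι → ℂ} {μ : ι → ℝ} {U : Matrix ι ι ℂ}
    (hU : diagonal d * U = U * diagonal fun i => (μ i : ℂ)) (f : ℝ → ℝ) :
    (diagonal fun j => (f (d j).re : ℂ)) * U = U * diagonal fun i => (f (μ i) : ℂ) := by
  ext j i
  have hji := congr_fun (congr_fun hU j) i
  simp only [diagonal_mul, mul_diagonal] at hji ⊢
  rcases eq_or_ne (U j i) 0 with h0 | h0
  · simp [h0]
  · rw [mul_comm _ (U j i)] at hji
    rw [mul_left_cancel₀ h0 hji, Complex.ofReal_re, mul_comm]

variable {n : ℕ}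

lemma re_trace_mul_hermLog_self {ρ : Matrix (Fin n) (Fin n) ℂ} (hρ : ρ.IsHermitian) :
    (ρ * hermLog hρ).trace.re = ∑ i, hρ.eigenvalues i * Real.log (hρ.eigenvalues i) := by
  rw [hermLog, ← mul_assoc, ← mul_assoc, hρ.mul_eigenvectorUnitary, trace_mul_comm,
    ← mul_assoc, ← mul_assoc, Unitary.coe_star_mul_self, one_mul, diagonal_mul_diagonal,
    trace_diagonal, Complex.re_sum]
  simp only [← Complex.ofReal_mul, Complex.ofReal_re]

lemma hermLog_diagonal {d : Fin n → ℂ} (h : (diagonal d).IsHermitian) :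
    hermLog h = diagonal fun j => (Real.log (d j).re : ℂ) := by
  rw [hermLog, ← diagonal_comp_mul_eq_mul_diagonal_comp h.mul_eigenvectorUnitary, mul_assoc,
    Unitary.mul_star_self_of_mem h.eigenvectorUnitary.2, mul_one]

lemma re_trace_mul_hermLog_sub_diagonal {ρ : Matrix (Fin n) (Fin n) ℂ} (hρ : ρ.IsHermitian)
    {d : Fin n → ℂ} (hσ : (diagonal d).IsHermitian) :
    (ρ * (hermLog hρ - hermLog hσ)).trace.re
      = ∑ i, hρ.eigenvalues i * Real.log (hρ.eigenvalues i)
        - ∑ j, (ρ j j).re * Real.log (d j).re := by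
  rw [mul_sub, trace_sub, Complex.sub_re, re_trace_mul_hermLog_self, hermLog_diagonal,
    trace_mul_comm, re_trace_diagonal_mul]
  simp only [mul_comm]

end HermLog

section Channel

variable {ι κ μ : Type*} [Fintype ι] [Fintype μ]

/-- Heisenberg picture `Φ†(Pₖ)`: measuring `P` after the channel with Kraus operators `A` is
measuring this family. -/
def krausDual (A : μ → Matrix ι ι ℂ) (P : κ → Matrix ι ι ℂ) (k : κ) : Matrix ι ι ℂ :=
  ∑ α, (A α)ᴴ * P k * A α

lemma trace_kraus_mul (A : μ → Matrix ι ι ℂ) (σ M : Matrix ι ι ℂ) :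
    ((∑ α, A α * σ * (A α)ᴴ) * M).trace = (σ * ∑ α, (A α)ᴴ * M * A α).trace := by
  simp only [Finset.sum_mul, Finset.mul_sum, trace_sum]
  refine Finset.sum_congr rfl fun α _ => ?_
  rw [mul_assoc, trace_mul_comm, ← mul_assoc, ← mul_assoc, trace_mul_comm, mul_assoc σ]

variable [DecidableEq ι] [Fintype κ] [DecidableEq κ]

lemma isPOVM_krausDual {A : μ → Matrix ι ι ℂ} (hA : ∑ α, (A α)ᴴ * A α = 1)
    {P : κ → Matrix ι ι ℂ} (hPherm : ∀ k, (P k).IsHermitian)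
    (hPorth : ∀ k k', P k * P k' = if k = k' then P k else 0) (hPsum : ∑ k, P k = 1) :
    IsPOVM (krausDual A P) := by
  refine ⟨fun k => ?_, ?_⟩
  · have hP : (P k).PosSemidef := by
      have : (P k)ᴴ * P k = P k := by simpa [(hPherm k).eq] using hPorth k k
      exact this ▸ posSemidef_conjTranspose_mul_self (P k)
    exact posSemidef_sum _ fun α _ => hP.conjTranspose_mul_mul_same (A α)
  · simp only [krausDual]
    rw [Finset.sum_comm, ← hA]
    simp only [← Finset.sum_mul, ← Finset.mul_sum, hPsum, mul_one]

end Channel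

lemma pcoh_eq_mul_outcomeProb {n mK K : ℕ} (A : Fin mK → Matrix (Fin n) (Fin n) ℂ)
    (P : Fin K → Matrix (Fin n) (Fin n) ℂ) (σ : Matrix (Fin n) (Fin n) ℂ) :
    pcoh A P σ = fun x => (σ x.1 x.1).re * outcomeProb σ (krausDual A P) x.2 := by
  ext x
  simp [pcoh, trace_mul_single, trace_kraus_mul, outcomeProb, krausDual]

/-- The KL divergence between the EPM distributions of `ρ` and its dephasing
`Δ[ρ]` is bounded by twice the quantum relative entropy `D(ρ‖Δ[ρ])`. -/
theorem stmt9 {n mK K : ℕ} (ρ : Matrix (Fin n) (Fin n) ℂ)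
    (hρ : ρ.PosSemidef) (hρtr : ρ.trace = 1)
    (hΔ : (Matrix.diagonal fun i => ρ i i).PosDef)
    (A : Fin mK → Matrix (Fin n) (Fin n) ℂ)
    (hKraus : ∑ α, (A α)ᴴ * A α = 1)
    (P : Fin K → Matrix (Fin n) (Fin n) ℂ)
    (hPherm : ∀ k, (P k).IsHermitian)
    (hPorth : ∀ k k', P k * P k' = if k = k' then P k else 0)
    (hPsum : ∑ k, P k = 1) :
    KLdiv (pcoh A P ρ) (pcoh A P (Matrix.diagonal fun i => ρ i i))
      ≤ 2 * ((ρ * (hermLog hρ.1 - hermLog hΔ.posSemidef.1)).trace).re := by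
  set s : Fin n → ℝ := fun j => (ρ j j).re
  have hΔs : (diagonal fun i => ρ i i) = diagonal fun j => (s j : ℂ) := by
    congr 1
    funext j
    exact (hρ.1.coe_re_apply_self j).symm
  have hs : ∀ j, 0 < s j := fun j =>
    (Complex.pos_iff.mp (posDef_diagonal_iff.mp hΔ j)).1
  have hs1 : ∑ j, s j = 1 := by
    simpa only [trace, diag_apply, Complex.re_sum, Complex.one_re] using congr_arg Complex.re hρtr
  have hF := isPOVM_krausDual hKraus hPherm hPorth hPsum
  have hD := klein_inequality_diagonal hρ hρtr hs hs1
  calc KLdiv (pcoh A P ρ) (pcoh A P (diagonal fun i => ρ i i))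
      = KLdiv (outcomeProb ρ (krausDual A P))
          (outcomeProb (diagonal fun j => (s j : ℂ)) (krausDual A P)) := by
        rw [pcoh_eq_mul_outcomeProb, pcoh_eq_mul_outcomeProb, hΔs]
        simp only [diagonal_apply_eq, Complex.ofReal_re]
        exact KLdiv_prod_same_fst hs1 _ _
    _ ≤ ∑ i, hρ.1.eigenvalues i * Real.log (hρ.1.eigenvalues i)
          - ∑ j, (ρ j j).re * Real.log (s j) := KLdiv_outcomeProb_diagonal_le hF hρ hρtr hs hs1
    _ ≤ 2 * ((ρ * (hermLog hρ.1 - hermLog hΔ.posSemidef.1)).trace).re := by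
        rw [re_trace_mul_hermLog_sub_diagonal]
        linarith
end

section
/- For a qubit evolving under a phase-covariant channel Φ (with respect to the σ_z eigenbasis) and with energy measurements in the σ_z eigenbasis, the EPM joint distribution p_coh(l,k)(ρ) = Tr(ρΠ_l)·Tr(Φ(ρ)Π'_k) coincides with p_coh(l,k)(Δ[ρ]) for every qubit state ρ; consequently the coherence fluctuation distance 𝔇_c(ρ) vanishes. -/
/-!
Conjugation by `phaseU (π / 2)` fixes the diagonal of a qubit matrix and negates its off-diagonal
part, so phase covariance forces the diagonal of `Φ X` to depend only on the diagonal of `X`.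
Hence `p_coh(σ)(l, k) = c_l ∑_{l'} c_{l'} T_{l' k}` for a diagonal state `σ = diag c`, where
`T_{l k} = ⟨k|Φ(|l⟩⟨l|)|k⟩` is a stochastic matrix, and the same holds for `ρ` with `c = diag ρ`.
The infimum then becomes a purely classical one over strictly positive probability vectors `c`:
it is nonnegative by Gibbs' inequality, and mixing `a = diag ρ` with the uniform distribution in
proportion `s : 1 - s` gives a `c` whose distribution dominates `s²` times that of `a`, hence a
divergence at most `-2 log s`, which tends to `0` as `s → 1`.
-/

open Matrix
open scoped ComplexOrder

/-- The phase rotation `e^{-iφσ_z} = diag(e^{-iφ}, e^{iφ})`. -/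
noncomputable def phaseU (φ : ℝ) : Matrix (Fin 2) (Fin 2) ℂ :=
  Matrix.diagonal ![Complex.exp (-(Complex.I * φ)), Complex.exp (Complex.I * φ)]

/-- EPM joint distribution for a qubit with energy measurements in the `σ_z`
eigenbasis: `p_coh(σ)(l,k) = Tr(σ Π_l) · Tr(Φ(σ) Π'_k)`. -/
noncomputable def pcohQubit (Φ : Matrix (Fin 2) (Fin 2) ℂ →ₗ[ℂ] Matrix (Fin 2) (Fin 2) ℂ)
    (σ : Matrix (Fin 2) (Fin 2) ℂ) : Fin 2 × Fin 2 → ℝ :=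
  fun x => ((σ * Matrix.single x.1 x.1 1).trace).re *
    ((Φ σ * Matrix.single x.2 x.2 1).trace).re

open Finset

section KullbackLeibler

variable {I : Type*} [Fintype I]

lemma sub_le_mul_log_div {p q : ℝ} (hp : 0 ≤ p) (hq : 0 ≤ q) (hpq : q = 0 → p = 0) :
    p - q ≤ p * Real.log (p / q) := by
  rcases hq.eq_or_lt with rfl | hq
  · simp [hpq rfl]
  · -- `q * klFun (p / q) = p * log (p / q) + q - p`
    have := mul_nonneg hq.le (InformationTheory.klFun_nonneg (div_nonneg hp hq.le))
    rw [InformationTheory.klFun_apply] at this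
    field_simp at this
    linarith

theorem KLdiv_nonneg {p q : I → ℝ} (hp : 0 ≤ p) (hq : 0 ≤ q) (hsum : ∑ i, q i ≤ ∑ i, p i)
    (hpq : ∀ i, q i = 0 → p i = 0) : 0 ≤ KLdiv p q :=
  calc 0 ≤ ∑ i, (p i - q i) := by rw [sum_sub_distrib]; linarith
    _ ≤ KLdiv p q := sum_le_sum fun i _ => sub_le_mul_log_div (hp i) (hq i) (hpq i)

theorem KLdiv_le_neg_log {p q : I → ℝ} {c : ℝ} (hp : 0 ≤ p) (hsum : ∑ i, p i = 1) (hc : 0 < c)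
    (hpq : ∀ i, c * p i ≤ q i) : KLdiv p q ≤ -Real.log c := by
  have hterm : ∀ i, p i * Real.log (p i / q i) ≤ p i * -Real.log c := by
    intro i
    rcases (hp i).eq_or_lt with hpi | hpi
    · simp [← hpi]
    have hqi : 0 < q i := (mul_pos hc hpi).trans_le (hpq i)
    refine mul_le_mul_of_nonneg_left ?_ hpi.le
    rw [← Real.log_inv]
    refine Real.log_le_log (div_pos hpi hqi) ?_
    rw [div_le_iff₀ hqi, inv_mul_eq_div, le_div_iff₀ hc, mul_comm]
    exact hpq i
  calc KLdiv p q ≤ ∑ i, p i * -Real.log c := sum_le_sum fun i _ => hterm i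
    _ = -Real.log c := by rw [← sum_mul, hsum, one_mul]

end KullbackLeibler

section EPM

variable {ι κ : Type*} [Fintype ι] {T : ι → κ → ℝ} {a c : ι → ℝ}

def epmDist (T : ι → κ → ℝ) (a : ι → ℝ) : ι × κ → ℝ :=
  fun x => a x.1 * ∑ l, a l * T l x.2

lemma epmDist_nonneg (hT : ∀ l k, 0 ≤ T l k) (ha : 0 ≤ a) : 0 ≤ epmDist T a := fun x =>
  mul_nonneg (ha x.1) (sum_nonneg fun l _ => mul_nonneg (ha l) (hT l x.2))

lemma sum_epmDist [Fintype κ] (hT : ∀ l, ∑ k, T l k = 1) :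
    ∑ x, epmDist T a x = (∑ l, a l) ^ 2 := by
  simp only [epmDist, Fintype.sum_prod_type, ← mul_sum]
  rw [sum_comm]
  simp only [← mul_sum, hT, mul_one, ← sum_mul, sq]

lemma epmDist_smul (s : ℝ) : epmDist T (s • a) = s ^ 2 • epmDist T a := by
  ext x
  simp only [epmDist, Pi.smul_apply, smul_eq_mul, mul_assoc, ← mul_sum]
  ring

lemma epmDist_mono (hT : ∀ l k, 0 ≤ T l k) (ha : 0 ≤ a) (hac : a ≤ c) :
    epmDist T a ≤ epmDist T c := fun x =>
  mul_le_mul (hac x.1) (sum_le_sum fun l _ => mul_le_mul_of_nonneg_right (hac l) (hT l x.2))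
    (sum_nonneg fun l _ => mul_nonneg (ha l) (hT l x.2)) ((ha x.1).trans (hac x.1))

lemma epmDist_eq_zero_of_epmDist_eq_zero (hT : ∀ l k, 0 ≤ T l k)
    (hc : ∀ l, 0 < c l) {x : ι × κ} (hx : epmDist T c x = 0) : epmDist T a x = 0 := by
  have hcT : ∑ l, c l * T l x.2 = 0 :=
    (mul_eq_zero.mp hx).resolve_left (hc x.1).ne'
  have hT0 : ∀ l, T l x.2 = 0 := fun l =>
    (mul_eq_zero.mp ((sum_eq_zero_iff_of_nonneg fun l _ =>
      mul_nonneg (hc l).le (hT l _)).mp hcT l (mem_univ l))).resolve_left (hc l).ne'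
  simp [epmDist, hT0]

theorem exists_KLdiv_epmDist_lt [Fintype κ] (hT : ∀ l k, 0 ≤ T l k)
    (hT1 : ∀ l, ∑ k, T l k = 1) (ha : 0 ≤ a) (ha1 : ∑ l, a l = 1) {ε : ℝ} (hε : 0 < ε) :
    ∃ c : ι → ℝ, (∀ l, 0 < c l) ∧ ∑ l, c l = 1 ∧ KLdiv (epmDist T a) (epmDist T c) < ε := by
  have hcard : (0 : ℝ) < Fintype.card ι := by
    obtain ⟨l, -⟩ := exists_ne_zero_of_sum_ne_zero (ha1 ▸ one_ne_zero)
    exact_mod_cast Fintype.card_pos_iff.mpr ⟨l⟩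
  set s := Real.exp (-(ε / 4))
  have hs0 : 0 < s := Real.exp_pos _
  have hs1 : s < 1 := Real.exp_lt_one_iff.mpr (by linarith)
  refine ⟨s • a + fun _ => (1 - s) / Fintype.card ι, fun l => ?_, ?_, ?_⟩
  · exact add_pos_of_nonneg_of_pos (mul_nonneg hs0.le (ha l)) (div_pos (by linarith) hcard)
  · simp only [Pi.add_apply, Pi.smul_apply, smul_eq_mul, sum_add_distrib, ← mul_sum, ha1,
      sum_const, card_univ, nsmul_eq_mul]
    field_simp
    ring
  · have hle : s ^ 2 • epmDist T a ≤ epmDist T (s • a + fun _ => (1 - s) / Fintype.card ι) := by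
      rw [← epmDist_smul]
      refine epmDist_mono hT (smul_nonneg hs0.le ha) fun l => ?_
      simp only [Pi.add_apply, le_add_iff_nonneg_right]
      exact div_nonneg (by linarith) hcard.le
    calc KLdiv (epmDist T a) _ ≤ -Real.log (s ^ 2) :=
          KLdiv_le_neg_log (epmDist_nonneg hT ha) (by rw [sum_epmDist hT1, ha1, one_pow])
            (by positivity) fun x => hle x
      _ < ε := by rw [Real.log_pow, Real.log_exp]; push_cast; linarith

theorem sInf_KLdiv_epmDist_eq_zero [Fintype κ] (hT : ∀ l k, 0 ≤ T l k)
    (hT1 : ∀ l, ∑ k, T l k = 1) (ha : 0 ≤ a) (ha1 : ∑ l, a l = 1) :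
    sInf {x | ∃ c : ι → ℝ, (∀ l, 0 < c l) ∧ ∑ l, c l = 1 ∧
      x = KLdiv (epmDist T a) (epmDist T c)} = 0 := by
  obtain ⟨c, hc, hc1, -⟩ := exists_KLdiv_epmDist_lt hT hT1 ha ha1 one_pos
  refine csInf_eq_of_forall_ge_of_forall_gt_exists_lt ⟨_, c, hc, hc1, rfl⟩ ?_ fun w hw => ?_
  · rintro _ ⟨c, hc, hc1, rfl⟩
    refine KLdiv_nonneg (epmDist_nonneg hT ha) (epmDist_nonneg hT fun l => (hc l).le) ?_
      fun x => epmDist_eq_zero_of_epmDist_eq_zero hT hc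
    rw [sum_epmDist hT1, sum_epmDist hT1, ha1, hc1]
  · obtain ⟨c, hc, hc1, hlt⟩ := exists_KLdiv_epmDist_lt hT hT1 ha ha1 hw
    exact ⟨_, ⟨c, hc, hc1, rfl⟩, hlt⟩

end EPM

section Channel

variable {n : Type*} [DecidableEq n]

lemma LinearMap.map_diagonal_apply [Fintype n] {R : Type*} [CommSemiring R]
    (Φ : Matrix n n R →ₗ[R] Matrix n n R) (d : n → R) (i j : n) :
    Φ (diagonal d) i j = ∑ l, d l * Φ (Matrix.single l l 1) i j := by
  simp only [← sum_single_eq_diagonal, map_sum, Matrix.sum_apply]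
  refine Finset.sum_congr rfl fun l _ => ?_
  rw [← smul_eq_mul, ← Matrix.smul_apply, ← map_smul, smul_single, smul_eq_mul, mul_one]

def populationTransfer (Φ : Matrix n n ℂ →ₗ[ℂ] Matrix n n ℂ) (l k : n) : ℝ :=
  (Φ (Matrix.single l l 1) k k).re

lemma populationTransfer_nonneg {Φ : Matrix n n ℂ →ₗ[ℂ] Matrix n n ℂ}
    (hPos : ∀ X, X.PosSemidef → (Φ X).PosSemidef) (l k : n) : 0 ≤ populationTransfer Φ l k := by
  have : (Matrix.single l l (1 : ℂ)).PosSemidef :=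
    diagonal_single l (1 : ℂ) ▸ PosSemidef.diagonal (Pi.single_nonneg.mpr zero_le_one)
  exact (Complex.nonneg_iff.mp ((hPos _ this).diag_nonneg)).1

lemma sum_populationTransfer [Fintype n] {Φ : Matrix n n ℂ →ₗ[ℂ] Matrix n n ℂ}
    (hTP : ∀ X, (Φ X).trace = X.trace) (l : n) : ∑ k, populationTransfer Φ l k = 1 := by
  simpa [populationTransfer, trace, Complex.re_sum] using
    congrArg Complex.re (hTP (Matrix.single l l 1))

end Channel

def PhaseCovariant (Φ : Matrix (Fin 2) (Fin 2) ℂ →ₗ[ℂ] Matrix (Fin 2) (Fin 2) ℂ) : Prop :=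
  ∀ (φ : ℝ) (X : Matrix (Fin 2) (Fin 2) ℂ),
    phaseU φ * Φ X * phaseU (-φ) = Φ (phaseU φ * X * phaseU (-φ))

section Qubit

variable {Φ : Matrix (Fin 2) (Fin 2) ℂ →ₗ[ℂ] Matrix (Fin 2) (Fin 2) ℂ}

lemma phaseU_conj_apply_self (φ : ℝ) (M : Matrix (Fin 2) (Fin 2) ℂ) (k : Fin 2) :
    (phaseU φ * M * phaseU (-φ)) k k = M k k := by
  fin_cases k <;> simp [phaseU, mul_right_comm _ (M _ _), ← Complex.exp_add]

lemma phaseU_pi_div_two_conj_add_self (M : Matrix (Fin 2) (Fin 2) ℂ) :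
    phaseU (Real.pi / 2) * M * phaseU (-(Real.pi / 2)) + M = 2 • diagonal fun j => M j j := by
  have hπ : Complex.exp (Complex.I * (Real.pi / 2)) ^ 2 = -1 := by
    rw [← Complex.exp_nat_mul, ← Complex.exp_pi_mul_I]; push_cast; ring_nf
  ext i j
  fin_cases i <;> fin_cases j <;>
    simp [phaseU, mul_right_comm _ (M _ _), ← two_mul, Complex.exp_neg, ← sq, hπ]

lemma map_apply_self_eq_map_diagonal (hcov : PhaseCovariant Φ)
    (M : Matrix (Fin 2) (Fin 2) ℂ) (k : Fin 2) :
    Φ M k k = Φ (diagonal fun j => M j j) k k := by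
  have hdiag := congrArg (· k k) (hcov (Real.pi / 2) M)
  have hsum := congrArg (Φ · k k) (phaseU_pi_div_two_conj_add_self M)
  simp only [phaseU_conj_apply_self, map_add, map_nsmul, Matrix.add_apply, Matrix.smul_apply]
    at hdiag hsum
  rw [← hdiag, two_nsmul] at hsum
  linear_combination hsum / 2

lemma pcohQubit_apply (Φ : Matrix (Fin 2) (Fin 2) ℂ →ₗ[ℂ] Matrix (Fin 2) (Fin 2) ℂ)
    (σ : Matrix (Fin 2) (Fin 2) ℂ) (x : Fin 2 × Fin 2) :
    pcohQubit Φ σ x = (σ x.1 x.1).re * (Φ σ x.2 x.2).re := by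
  simp [pcohQubit, trace_mul_single]

lemma pcohQubit_eq_epmDist (hcov : PhaseCovariant Φ)
    {σ : Matrix (Fin 2) (Fin 2) ℂ} (hσ : σ.IsHermitian) :
    pcohQubit Φ σ = epmDist (populationTransfer Φ) fun l => (σ l l).re := by
  have him : ∀ l, (σ l l).im = 0 := fun l => by
    simpa using (congrArg Complex.im (hσ.coe_re_apply_self l)).symm
  ext x
  rw [pcohQubit_apply, map_apply_self_eq_map_diagonal hcov, LinearMap.map_diagonal_apply]
  simp [epmDist, populationTransfer, Complex.mul_re, him]

lemma setOf_KLdiv_pcohQubit_eq (hcov : PhaseCovariant Φ)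
    (p : Fin 2 × Fin 2 → ℝ) :
    {x : ℝ | ∃ σ : Matrix (Fin 2) (Fin 2) ℂ, σ.PosDef ∧ σ.trace = 1 ∧
        (∀ i j, i ≠ j → σ i j = 0) ∧ x = KLdiv p (pcohQubit Φ σ)} =
      {x | ∃ c : Fin 2 → ℝ, (∀ l, 0 < c l) ∧ ∑ l, c l = 1 ∧
        x = KLdiv p (epmDist (populationTransfer Φ) c)} := by
  ext x
  constructor
  · rintro ⟨σ, hσ, htr, -, rfl⟩
    refine ⟨fun l => (σ l l).re, fun l => (Complex.pos_iff.mp (hσ.diag_pos)).1, ?_,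
      by rw [pcohQubit_eq_epmDist hcov hσ.isHermitian]⟩
    simpa [trace, Complex.re_sum] using congrArg Complex.re htr
  · rintro ⟨c, hc, hc1, rfl⟩
    have hpd : (diagonal fun l => (c l : ℂ)).PosDef :=
      posDef_diagonal_iff.mpr fun l => by exact_mod_cast hc l
    refine ⟨_, hpd, ?_, fun i j hij => diagonal_apply_ne _ hij, ?_⟩
    · rw [Fin.sum_univ_two] at hc1
      simp only [trace, diag_apply, diagonal_apply_eq, Fin.sum_univ_two]
      exact_mod_cast hc1
    · rw [pcohQubit_eq_epmDist hcov hpd.isHermitian]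
      simp

end Qubit

/-- For a phase-covariant qubit channel the EPM distribution of `ρ` equals that
of its dephasing `Δ[ρ]`, and hence the coherence fluctuation distance vanishes. -/
theorem stmt12 (Φ : Matrix (Fin 2) (Fin 2) ℂ →ₗ[ℂ] Matrix (Fin 2) (Fin 2) ℂ)
    (hcov : ∀ (φ : ℝ) (X : Matrix (Fin 2) (Fin 2) ℂ),
      phaseU φ * Φ X * phaseU (-φ) = Φ (phaseU φ * X * phaseU (-φ)))
    (hTP : ∀ X : Matrix (Fin 2) (Fin 2) ℂ, (Φ X).trace = X.trace)
    (hPos : ∀ X : Matrix (Fin 2) (Fin 2) ℂ, X.PosSemidef → (Φ X).PosSemidef)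
    (ρ : Matrix (Fin 2) (Fin 2) ℂ) (hρ : ρ.PosSemidef) (hρtr : ρ.trace = 1) :
    (∀ x : Fin 2 × Fin 2,
      pcohQubit Φ ρ x = pcohQubit Φ (Matrix.diagonal fun j => ρ j j) x) ∧
    sInf {x : ℝ | ∃ σ : Matrix (Fin 2) (Fin 2) ℂ, σ.PosDef ∧ σ.trace = 1 ∧
        (∀ i j, i ≠ j → σ i j = 0) ∧
        x = KLdiv (pcohQubit Φ ρ) (pcohQubit Φ σ)} = 0 := by
  refine ⟨fun x => ?_, ?_⟩
  · rw [pcohQubit_apply, pcohQubit_apply, map_apply_self_eq_map_diagonal hcov ρ,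
      diagonal_apply_eq]
  have ha : 0 ≤ fun l => (ρ l l).re := fun l => (Complex.nonneg_iff.mp hρ.diag_nonneg).1
  have ha1 : ∑ l, (ρ l l).re = 1 := by
    simpa [trace, Complex.re_sum] using congrArg Complex.re hρtr
  rw [setOf_KLdiv_pcohQubit_eq hcov, pcohQubit_eq_epmDist hcov hρ.isHermitian]
  exact sInf_KLdiv_epmDist_eq_zero (populationTransfer_nonneg hPos) (sum_populationTransfer hTP)
    ha ha1
end
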